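/- arXiv:0908.3070 — 2 statements merged into one kernel-verified Lean document; each statement's English description precedes it below -/
import Mathlib

section
/- Conversely, if v : ℝⁿ → ℝ is a smooth function with D²v positive definite satisfying det D²v = exp(n·(v − (1/2)·⟨x, Dv⟩)) for all x, then u(x,t) := t·v(x/√t) defined for t > 0 solves the logarithmic gradient flow ∂u/∂t = (1/n)·ln det D²u on ℝⁿ × (0,∞). -/
noncomputable def grad' {n : ℕ} (f : (Fin n → ℝ) → ℝ) (x : Fin n → ℝ) : Fin n → ℝ :=
  fun i => fderiv ℝ f x (Pi.single i 1)

noncomputable def hess' {n : ℕ} (f : (Fin n → ℝ) → ℝ) (x : Fin n → ℝ) :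
    Matrix (Fin n) (Fin n) ℝ :=
  Matrix.of fun i j => fderiv ℝ (fun y => fderiv ℝ f y (Pi.single i 1)) x (Pi.single j 1)

lemma fderiv_smul_comp {n : ℕ} (f : (Fin n → ℝ) → ℝ) (hf : Differentiable ℝ f)
    (c : ℝ) (y d : Fin n → ℝ) :
    fderiv ℝ (fun z => f (c • z)) y d = fderiv ℝ f (c • y) (c • d) := by
  have hL : HasFDerivAt (fun z : Fin n → ℝ => c • z)
      (c • ContinuousLinearMap.id ℝ (Fin n → ℝ)) y := by
    simpa using (c • ContinuousLinearMap.id ℝ (Fin n → ℝ)).hasFDerivAt (x := y)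
  have := ((hf (c • y)).hasFDerivAt.comp y hL).fderiv
  rw [show (fun z : Fin n → ℝ => f (c • z)) = f ∘ (fun z : Fin n → ℝ => c • z) from rfl,
    this]
  simp

theorem MA_solution_gives_selfsimilar_flow (n : ℕ) (hn : 1 ≤ n)
    (v : (Fin n → ℝ) → ℝ)
    (hsmooth : ContDiff ℝ (⊤ : ℕ∞) v)
    (hposdef : ∀ x : Fin n → ℝ, (hess' v x).PosDef)
    (hMA : ∀ x : Fin n → ℝ,
      (hess' v x).det = Real.exp (n * (v x - (1 / 2) * ∑ i, x i * grad' v x i))) :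
    ∀ (x : Fin n → ℝ) (t : ℝ), 0 < t →
      deriv (fun s : ℝ => s * v (fun i => x i / Real.sqrt s)) t =
        (1 / n) * Real.log
          (hess' (fun y => t * v (fun i => y i / Real.sqrt t)) x).det := by
  intro x t ht
  have hst : 0 < Real.sqrt t := Real.sqrt_pos.mpr ht
  have hss : Real.sqrt t * Real.sqrt t = t := Real.mul_self_sqrt ht.le
  set c : ℝ := (Real.sqrt t)⁻¹ with hc
  have hcpos : 0 < c := inv_pos.mpr hst
  set z : Fin n → ℝ := c • x with hz
  have hdv : Differentiable ℝ v := hsmooth.differentiable (by simp)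
  have hg : ∀ i : Fin n, Differentiable ℝ (fun y => fderiv ℝ v y (Pi.single i 1)) := by
    intro i
    have hs' : ContDiff ℝ ((⊤ : ℕ∞) : WithTop ℕ∞) v := hsmooth.of_le (by simp)
    have hfd : ContDiff ℝ ((⊤ : ℕ∞) : WithTop ℕ∞) (fderiv ℝ v) :=
      (contDiff_infty_iff_fderiv.mp hs').2
    exact (hfd.clm_apply contDiff_const).differentiable (by simp)
  have hrew : ∀ s : ℝ, (fun i => x i / Real.sqrt s) = (Real.sqrt s)⁻¹ • x := by
    intro s; funext i
    simp [div_eq_mul_inv, mul_comm]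
  have hrew2 : ∀ y : Fin n → ℝ, (fun i => y i / Real.sqrt t) = c • y := by
    intro y; funext i
    simp [hc, div_eq_mul_inv, mul_comm]
  have hwfun : (fun y : Fin n → ℝ => t * v (fun i => y i / Real.sqrt t))
      = fun y => t * v (c • y) := by
    funext y
    rw [hrew2 y]
  have hvc : Differentiable ℝ (fun y : Fin n → ℝ => v (c • y)) := by
    exact hdv.comp (differentiable_id.const_smul c)
  have hcc : t * c * c = 1 := by
    rw [hc]
    field_simp
    linarith [Real.sq_sqrt ht.le]
  -- Hessian identity
  have hess_eq : hess' (fun y => t * v (fun i => y i / Real.sqrt t)) x = hess' v z := by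
    rw [hwfun]
    ext i j
    show fderiv ℝ (fun y => fderiv ℝ (fun y' => t * v (c • y')) y (Pi.single i 1)) x
        (Pi.single j 1) = fderiv ℝ (fun y => fderiv ℝ v y (Pi.single i 1)) z (Pi.single j 1)
    have h1 : (fun y => fderiv ℝ (fun y' => t * v (c • y')) y (Pi.single i 1))
        = fun y => (t * c) * fderiv ℝ v (c • y) (Pi.single i 1) := by
      funext y
      rw [fderiv_const_mul (hvc y)]
      simp only [ContinuousLinearMap.smul_apply, smul_eq_mul]
      rw [fderiv_smul_comp v hdv, map_smul, smul_eq_mul]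
      ring
    rw [h1]
    have hgc : Differentiable ℝ (fun y : Fin n → ℝ =>
        fderiv ℝ v (c • y) (Pi.single i 1)) :=
      (hg i).comp (differentiable_id.const_smul c)
    rw [fderiv_const_mul (hgc x)]
    simp only [ContinuousLinearMap.smul_apply, smul_eq_mul]
    rw [fderiv_smul_comp _ (hg i), map_smul, smul_eq_mul, ← hz]
    calc t * c * (c * fderiv ℝ (fun y => fderiv ℝ v y (Pi.single i 1)) z (Pi.single j 1))
        = (t * c * c) * fderiv ℝ (fun y => fderiv ℝ v y (Pi.single i 1)) z (Pi.single j 1) := by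
          ring
      _ = _ := by rw [hcc]; ring
  -- gradient as sum
  have hxsum : ∀ (w : Fin n → ℝ), fderiv ℝ v w x = ∑ i, x i * grad' v w i := by
    intro w
    have hx : x = ∑ i : Fin n, x i • (Pi.single i 1 : Fin n → ℝ) := by
      funext j
      simp [Finset.sum_apply, Pi.single_apply]
    conv_lhs => rw [hx]
    rw [map_sum]
    simp [grad', smul_eq_mul]
  -- LHS derivative
  set c' : ℝ := -(1 / (2 * Real.sqrt t)) / (Real.sqrt t) ^ 2 with hc'
  have hsq : HasDerivAt Real.sqrt (1 / (2 * Real.sqrt t)) t := Real.hasDerivAt_sqrt ht.ne'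
  have hinv : HasDerivAt (fun s => (Real.sqrt s)⁻¹) c' t := hsq.inv hst.ne'
  have hsmul : HasDerivAt (fun s : ℝ => (Real.sqrt s)⁻¹ • x) (c' • x) t := hinv.smul_const x
  have h0 : HasFDerivAt v (fderiv ℝ v z) ((Real.sqrt t)⁻¹ • x) := by
    have h := (hdv z).hasFDerivAt
    rwa [hz, hc] at h
  have hvd : HasDerivAt (fun s : ℝ => v ((Real.sqrt s)⁻¹ • x))
      (fderiv ℝ v z (c' • x)) t := h0.comp_hasDerivAt t hsmul
  have hmul : HasDerivAt (fun s : ℝ => s * v ((Real.sqrt s)⁻¹ • x))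
      (1 * v ((Real.sqrt t)⁻¹ • x) + t * fderiv ℝ v z (c' • x)) t :=
    (hasDerivAt_id t).mul hvd
  have hfun : (fun s : ℝ => s * v (fun i => x i / Real.sqrt s))
      = fun s : ℝ => s * v ((Real.sqrt s)⁻¹ • x) := by
    funext s; rw [hrew s]
  have hn' : (n : ℝ) ≠ 0 := Nat.cast_ne_zero.mpr (by omega)
  have hzx : ∀ i, z i = c * x i := by intro i; rw [hz]; simp
  have hzsum : ∑ i, z i * grad' v z i = c * ∑ i, x i * grad' v z i := by
    rw [Finset.mul_sum]
    exact Finset.sum_congr rfl fun i _ => by rw [hzx i]; ring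
  have htc' : t * c' = -(c / 2) := by
    rw [hc', hc, sq]
    field_simp
    linarith [Real.sq_sqrt ht.le]
  rw [hfun, hmul.deriv, hess_eq, hMA z, Real.log_exp]
  rw [show (Real.sqrt t)⁻¹ • x = z by rw [hz, hc]]
  rw [map_smul, smul_eq_mul, hxsum z, hzsum]
  rw [one_div, inv_mul_cancel_left₀ hn']
  linear_combination (∑ i, x i * grad' v z i) * htc'
end

section
/- Let u : ℝⁿ × (0,∞) → ℝ be a smooth solution of ∂u/∂t = (1/n)·ln det D²u with D²u positive definite, and set w = |Du|² (squared norm of the spatial gradient). Then w satisfies ∂w/∂t − (1/n)·Σ_{i,j} uⁱʲ w_{ij} = −(2/n)·Σ_{p,q,i} u^{pq} u_{pi} u_{qi} ≤ 0, where [uⁱʲ] = (D²u)⁻¹ and subscripts denote spatial partial derivatives. -/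
open Matrix Finset

lemma det_updateRow_sum' {m : ℕ} (A : Matrix (Fin m) (Fin m) ℝ) (b : Fin m → ℝ) (i : Fin m) :
    (A.updateRow i b).det = ∑ q, A.adjugate q i * b q := by
  rw [← Matrix.cramer_transpose_apply, Matrix.cramer_eq_adjugate_mulVec, Matrix.mulVec,
    dotProduct]
  exact Finset.sum_congr rfl fun q _ => by
    rw [← Matrix.adjugate_transpose, Matrix.transpose_apply]

lemma det_deriv_algebra {m : ℕ} (A : Matrix (Fin m) (Fin m) ℝ) (r : Fin m → Fin m → ℝ) :
    ∑ σ : Equiv.Perm (Fin m), ((Equiv.Perm.sign σ : ℤ) : ℝ) *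
        ∑ i, (∏ j ∈ Finset.univ.erase i, A (σ j) j) * r (σ i) i =
      ∑ i, ∑ q, A.adjugate q i * r i q := by
  have h1 : ∀ i, ∑ q, A.adjugate q i * r i q = (A.updateRow i (r i)).det := fun i =>
    (det_updateRow_sum' A (r i) i).symm
  simp_rw [h1, Matrix.det_apply']
  rw [Finset.sum_comm]
  refine Finset.sum_congr rfl fun σ _ => ?_
  rw [Finset.mul_sum]
  have h2 : ∀ i : Fin m, ∏ j, A.updateRow i (r i) (σ j) j
      = r i (σ.symm i) * ∏ j ∈ Finset.univ.erase (σ.symm i), A (σ j) j := by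
    intro i
    rw [← Finset.mul_prod_erase Finset.univ _ (Finset.mem_univ (σ.symm i))]
    congr 1
    · rw [Equiv.apply_symm_apply]
      exact congrFun Matrix.updateRow_self _
    · refine Finset.prod_congr rfl fun j hj => ?_
      have : σ j ≠ i := fun h => (Finset.mem_erase.mp hj).1 (by simp [← h])
      exact congrFun (Matrix.updateRow_ne this) j
  simp_rw [h2]
  have := Equiv.sum_comp σ.symm
    (fun i => ((Equiv.Perm.sign σ : ℤ) : ℝ) * ((∏ j ∈ Finset.univ.erase i, A (σ j) j) * r (σ i) i))
  rw [← this]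
  refine Finset.sum_congr rfl fun i _ => ?_
  rw [Equiv.apply_symm_apply]
  ring

lemma det_hasFDerivAt' {m : ℕ} {E : Type*} [NormedAddCommGroup E] [NormedSpace ℝ E]
    (M : E → Matrix (Fin m) (Fin m) ℝ) (M' : Fin m → Fin m → E →L[ℝ] ℝ) (x : E)
    (h : ∀ i j, HasFDerivAt (fun p => M p i j) (M' i j) x) :
    HasFDerivAt (fun p => (M p).det) (∑ i, ∑ q, (M x).adjugate q i • M' i q) x := by
  have key : HasFDerivAt
      (fun p => ∑ σ : Equiv.Perm (Fin m), ((Equiv.Perm.sign σ : ℤ) : ℝ) * ∏ i, M p (σ i) i)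
      (∑ σ : Equiv.Perm (Fin m), ((Equiv.Perm.sign σ : ℤ) : ℝ) •
        ∑ i, (∏ j ∈ Finset.univ.erase i, M x (σ j) j) • M' (σ i) i) x :=
    HasFDerivAt.fun_sum fun σ _ =>
      (HasFDerivAt.finset_prod (fun i _ => h (σ i) i)).const_mul _
  have hfun : (fun p => (M p).det)
      = fun p => ∑ σ : Equiv.Perm (Fin m), ((Equiv.Perm.sign σ : ℤ) : ℝ) * ∏ i, M p (σ i) i := by
    funext p; exact Matrix.det_apply' (M p)
  rw [hfun]
  convert key using 1
  ext v
  simp only [ContinuousLinearMap.sum_apply, ContinuousLinearMap.smul_apply, smul_eq_mul]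
  rw [← det_deriv_algebra (M x) (fun i q => M' i q v)]

section helpers
variable {E : Type*} [NormedAddCommGroup E] [NormedSpace ℝ E]

lemma pd_contDiffOn {f : E → ℝ} {S : Set E} (hf : ContDiffOn ℝ (⊤ : ℕ∞) f S) (hS : IsOpen S) (v : E) :
    ContDiffOn ℝ (⊤ : ℕ∞) (fun p => fderiv ℝ f p v) S :=
  (hf.fderiv_of_isOpen hS (by simp)).clm_apply contDiffOn_const

lemma pd_hasFDerivAt {f : E → ℝ} {S : Set E} (hf : ContDiffOn ℝ (⊤ : ℕ∞) f S) (hS : IsOpen S)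
    {p : E} (hp : p ∈ S) : HasFDerivAt f (fderiv ℝ f p) p :=
  ((hf.contDiffAt (hS.mem_nhds hp)).differentiableAt (by simp)).hasFDerivAt

lemma pd_schwarz {f : E → ℝ} {S : Set E} (hf : ContDiffOn ℝ (⊤ : ℕ∞) f S) (hS : IsOpen S)
    {p : E} (hp : p ∈ S) (v w : E) :
    fderiv ℝ (fun q => fderiv ℝ f q v) p w = fderiv ℝ (fun q => fderiv ℝ f q w) p v := by
  have hat : ContDiffAt ℝ (⊤ : ℕ∞) f p := hf.contDiffAt (hS.mem_nhds hp)
  have hdf : DifferentiableAt ℝ (fderiv ℝ f) p :=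
    (hat.fderiv_right (m := 1) (WithTop.coe_le_coe.2 le_top)).differentiableAt one_ne_zero
  have h1 : ∀ z : E, fderiv ℝ (fun q => fderiv ℝ f q z) p
      = (fderiv ℝ (fderiv ℝ f) p).flip z := by
    intro z
    rw [fderiv_clm_apply hdf (differentiableAt_const z)]
    simp
  rw [h1 v, h1 w]
  have hsym := hat.isSymmSndFDerivAt (by rw [minSmoothness_of_isRCLikeNormedField]; exact WithTop.coe_le_coe.2 le_top)
  simpa using hsym w v

lemma pd_eqOn_fderiv {f g : E → ℝ} {S : Set E} (hS : IsOpen S) (h : Set.EqOn f g S)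
    {p : E} (hp : p ∈ S) : fderiv ℝ f p = fderiv ℝ g p :=
  Filter.EventuallyEq.fderiv_eq (Filter.eventuallyEq_of_mem (hS.mem_nhds hp) h)
end helpers

section setup
variable {n : ℕ}

def Sset (n : ℕ) : Set ((Fin n → ℝ) × ℝ) := {p | 0 < p.2}

lemma Sset_open : IsOpen (Sset n) := isOpen_lt continuous_const continuous_snd

noncomputable def D1 (u : (Fin n → ℝ) → ℝ → ℝ) (i : Fin n) : (Fin n → ℝ) × ℝ → ℝ :=
  fun p => fderiv ℝ (fun q : (Fin n → ℝ) × ℝ => u q.1 q.2) p (Pi.single i 1, 0)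

noncomputable def D2 (u : (Fin n → ℝ) → ℝ → ℝ) (i j : Fin n) : (Fin n → ℝ) × ℝ → ℝ :=
  fun p => fderiv ℝ (D1 u i) p (Pi.single j 1, 0)

noncomputable def D3 (u : (Fin n → ℝ) → ℝ → ℝ) (i j k : Fin n) : (Fin n → ℝ) × ℝ → ℝ :=
  fun p => fderiv ℝ (D2 u i j) p (Pi.single k 1, 0)

noncomputable def DT (u : (Fin n → ℝ) → ℝ → ℝ) : (Fin n → ℝ) × ℝ → ℝ :=
  fun p => fderiv ℝ (fun q : (Fin n → ℝ) × ℝ => u q.1 q.2) p (0, 1)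

/-- slice in space: fderiv of `y ↦ g (y,t)` -/
lemma slice_hasFDerivAt {g : (Fin n → ℝ) × ℝ → ℝ} {S : Set ((Fin n → ℝ) × ℝ)}
    (hg : ContDiffOn ℝ (⊤ : ℕ∞) g S) (hS : IsOpen S) {x : Fin n → ℝ} {t : ℝ} (hp : (x, t) ∈ S) :
    HasFDerivAt (fun y => g (y, t))
      ((fderiv ℝ g (x, t)).comp (ContinuousLinearMap.inl ℝ (Fin n → ℝ) ℝ)) x :=
  (pd_hasFDerivAt hg hS hp).comp x (hasFDerivAt_prodMk_left x t)

lemma slice_fderiv {g : (Fin n → ℝ) × ℝ → ℝ} {S : Set ((Fin n → ℝ) × ℝ)}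
    (hg : ContDiffOn ℝ (⊤ : ℕ∞) g S) (hS : IsOpen S) {x : Fin n → ℝ} {t : ℝ} (hp : (x, t) ∈ S)
    (v : Fin n → ℝ) :
    fderiv ℝ (fun y => g (y, t)) x v = fderiv ℝ g (x, t) (v, 0) := by
  rw [(slice_hasFDerivAt hg hS hp).fderiv]; rfl

lemma slice_hasDerivAt {g : (Fin n → ℝ) × ℝ → ℝ} {S : Set ((Fin n → ℝ) × ℝ)}
    (hg : ContDiffOn ℝ (⊤ : ℕ∞) g S) (hS : IsOpen S) {x : Fin n → ℝ} {t : ℝ} (hp : (x, t) ∈ S) :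
    HasDerivAt (fun s => g (x, s)) (fderiv ℝ g (x, t) (0, 1)) t :=
  (pd_hasFDerivAt hg hS hp).comp_hasDerivAt t
    ((hasDerivAt_const t x).prodMk (hasDerivAt_id t))

variable {u : (Fin n → ℝ) → ℝ → ℝ}
  (hu : ContDiffOn ℝ (⊤ : ℕ∞) (fun p : (Fin n → ℝ) × ℝ => u p.1 p.2) (Sset n))

include hu

lemma hD1 (i : Fin n) : ContDiffOn ℝ (⊤ : ℕ∞) (D1 u i) (Sset n) :=
  pd_contDiffOn hu Sset_open _

lemma hD2 (i j : Fin n) : ContDiffOn ℝ (⊤ : ℕ∞) (D2 u i j) (Sset n) :=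
  pd_contDiffOn (hD1 hu i) Sset_open _

omit hu in
lemma mem_Sset {x : Fin n → ℝ} {t : ℝ} (ht : 0 < t) : (x, t) ∈ Sset n := ht

lemma grad_eq {x : Fin n → ℝ} {t : ℝ} (ht : 0 < t) (i : Fin n) :
    grad' (fun y => u y t) x i = D1 u i (x, t) :=
  slice_fderiv hu Sset_open (mem_Sset ht) _

lemma hess_eq {x : Fin n → ℝ} {t : ℝ} (ht : 0 < t) (i j : Fin n) :
    hess' (fun y => u y t) x i j = D2 u i j (x, t) := by
  have h1 : (fun y => fderiv ℝ (fun z => u z t) y (Pi.single i 1))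
      = fun y => D1 u i (y, t) := by
    funext y
    exact slice_fderiv hu Sset_open (mem_Sset ht) _
  show fderiv ℝ (fun y => fderiv ℝ (fun z => u z t) y (Pi.single i 1)) x (Pi.single j 1) = _
  rw [h1]
  exact slice_fderiv (hD1 hu i) Sset_open (mem_Sset ht) _

lemma D2_symm {p : (Fin n → ℝ) × ℝ} (hp : p ∈ Sset n) (i j : Fin n) :
    D2 u i j p = D2 u j i p :=
  pd_schwarz hu Sset_open hp _ _

lemma D3_symm_outer {p : (Fin n → ℝ) × ℝ} (hp : p ∈ Sset n) (i j k : Fin n) :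
    D3 u i j k p = D3 u i k j p :=
  pd_schwarz (hD1 hu i) Sset_open hp _ _

lemma D3_symm_inner {p : (Fin n → ℝ) × ℝ} (hp : p ∈ Sset n) (i j k : Fin n) :
    D3 u i j k p = D3 u j i k p := by
  show fderiv ℝ (D2 u i j) p _ = fderiv ℝ (D2 u j i) p _
  rw [pd_eqOn_fderiv Sset_open (fun q hq => D2_symm hu hq i j) hp]

lemma mixed_symm {p : (Fin n → ℝ) × ℝ} (hp : p ∈ Sset n) (i : Fin n) :
    fderiv ℝ (D1 u i) p ((0 : Fin n → ℝ), (1 : ℝ))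
      = fderiv ℝ (DT u) p (Pi.single i 1, 0) :=
  pd_schwarz hu Sset_open hp _ _

lemma w_time_deriv {x : Fin n → ℝ} {t : ℝ} (ht : 0 < t) :
    deriv (fun s => ∑ i, (grad' (fun y => u y s) x i) ^ 2) t
      = ∑ i, 2 * D1 u i (x, t) * fderiv ℝ (D1 u i) (x, t) ((0 : Fin n → ℝ), (1 : ℝ)) := by
  have hder : HasDerivAt (fun s => ∑ i, (D1 u i (x, s)) ^ 2)
      (∑ i, 2 * D1 u i (x, t) * fderiv ℝ (D1 u i) (x, t) ((0 : Fin n → ℝ), (1 : ℝ))) t := by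
    refine HasDerivAt.fun_sum fun i _ => ?_
    have h1 : HasDerivAt (fun s => D1 u i (x, s))
        (fderiv ℝ (D1 u i) (x, t) ((0 : Fin n → ℝ), (1 : ℝ))) t :=
      slice_hasDerivAt (hD1 hu i) Sset_open (mem_Sset ht)
    convert h1.fun_pow 2 using 1
    · rfl
    push_cast
    ring
  have hev : (fun s => ∑ i, (grad' (fun y => u y s) x i) ^ 2)
      =ᶠ[nhds t] (fun s => ∑ i, (D1 u i (x, s)) ^ 2) := by
    filter_upwards [isOpen_Ioi.mem_nhds (Set.mem_Ioi.2 ht)] with s hs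
    exact Finset.sum_congr rfl fun i _ => by rw [grad_eq hu hs i]
  rw [hev.deriv_eq]
  exact hder.deriv

lemma w_hess {x : Fin n → ℝ} {t : ℝ} (ht : 0 < t) (i j : Fin n) :
    hess' (fun y => ∑ k, (grad' (fun z => u z t) y k) ^ 2) x i j
      = ∑ k, 2 * (D2 u k j (x, t) * D2 u k i (x, t)
          + D1 u k (x, t) * D3 u k i j (x, t)) := by
  have hw : (fun y => ∑ k, (grad' (fun z => u z t) y k) ^ 2)
      = fun y => ∑ k, (D1 u k (y, t)) ^ 2 := by
    funext y
    exact Finset.sum_congr rfl fun k _ => by rw [grad_eq hu ht k]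
  have hinner : ∀ y : Fin n → ℝ,
      fderiv ℝ (fun y' => ∑ k, (D1 u k (y', t)) ^ 2) y (Pi.single i 1)
        = ∑ k, 2 * D1 u k (y, t) * D2 u k i (y, t) := by
    intro y
    have hpow : (fun y' : Fin n → ℝ => ∑ k, (D1 u k (y', t)) ^ 2)
        = fun y' => ∑ k, D1 u k (y', t) * D1 u k (y', t) := by
      funext y'
      exact Finset.sum_congr rfl fun k _ => sq (D1 u k (y', t))
    rw [hpow]
    have hder : HasFDerivAt (fun y' => ∑ k, D1 u k (y', t) * D1 u k (y', t))
        (∑ k, (D1 u k (y, t) •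
            ((fderiv ℝ (D1 u k) (y, t)).comp (ContinuousLinearMap.inl ℝ (Fin n → ℝ) ℝ))
          + D1 u k (y, t) •
            ((fderiv ℝ (D1 u k) (y, t)).comp (ContinuousLinearMap.inl ℝ (Fin n → ℝ) ℝ)))) y :=
      HasFDerivAt.fun_sum fun k _ =>
        (slice_hasFDerivAt (hD1 hu k) Sset_open (mem_Sset ht)).mul
          (slice_hasFDerivAt (hD1 hu k) Sset_open (mem_Sset ht))
    rw [hder.fderiv]
    simp only [ContinuousLinearMap.sum_apply, ContinuousLinearMap.smul_apply,
      ContinuousLinearMap.add_apply, ContinuousLinearMap.comp_apply,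
      ContinuousLinearMap.inl_apply, smul_eq_mul]
    refine Finset.sum_congr rfl fun k _ => ?_
    have : (fderiv ℝ (D1 u k) (y, t)) (Pi.single i 1, 0) = D2 u k i (y, t) := rfl
    rw [this]
    ring
  show fderiv ℝ (fun y => fderiv ℝ
      (fun y' => ∑ k, (grad' (fun z => u z t) y' k) ^ 2) y (Pi.single i 1)) x (Pi.single j 1) = _
  rw [hw]
  have hfun : (fun y => fderiv ℝ (fun y' => ∑ k, (D1 u k (y', t)) ^ 2) y (Pi.single i 1))
      = fun y => ∑ k, 2 * D1 u k (y, t) * D2 u k i (y, t) := funext hinner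
  rw [hfun]
  have houter : HasFDerivAt (fun y => ∑ k, 2 * D1 u k (y, t) * D2 u k i (y, t))
      (∑ k, (2 : ℝ) • (D1 u k (x, t) •
          ((fderiv ℝ (D2 u k i) (x, t)).comp (ContinuousLinearMap.inl ℝ (Fin n → ℝ) ℝ))
        + D2 u k i (x, t) •
          ((fderiv ℝ (D1 u k) (x, t)).comp (ContinuousLinearMap.inl ℝ (Fin n → ℝ) ℝ)))) x := by
    refine HasFDerivAt.fun_sum fun k _ => ?_
    have hc : HasFDerivAt (fun y => D1 u k (y, t))
        ((fderiv ℝ (D1 u k) (x, t)).comp (ContinuousLinearMap.inl ℝ (Fin n → ℝ) ℝ)) x :=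
      slice_hasFDerivAt (hD1 hu k) Sset_open (mem_Sset ht)
    have hd : HasFDerivAt (fun y => D2 u k i (y, t))
        ((fderiv ℝ (D2 u k i) (x, t)).comp (ContinuousLinearMap.inl ℝ (Fin n → ℝ) ℝ)) x :=
      slice_hasFDerivAt (hD2 hu k i) Sset_open (mem_Sset ht)
    have := (hc.mul hd).const_mul (2 : ℝ)
    simpa [mul_assoc] using this
  rw [houter.fderiv]
  simp only [ContinuousLinearMap.sum_apply, ContinuousLinearMap.smul_apply,
    ContinuousLinearMap.add_apply, ContinuousLinearMap.comp_apply,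
    ContinuousLinearMap.inl_apply, smul_eq_mul]
  refine Finset.sum_congr rfl fun k _ => ?_
  have h3 : (fderiv ℝ (D2 u k i) (x, t)) (Pi.single j 1, 0) = D3 u k i j (x, t) := rfl
  have h4 : (fderiv ℝ (D1 u k) (x, t)) (Pi.single j 1, 0) = D2 u k j (x, t) := rfl
  rw [h3, h4]
  ring

variable (hflow : ∀ (x : Fin n → ℝ) (t : ℝ), 0 < t →
      deriv (fun s => u x s) t = (1 / n) * Real.log (hess' (fun y => u y t) x).det)

include hflow

lemma DT_eq : Set.EqOn (DT u)
    (fun p => (1 / (n : ℝ)) * Real.log ((Matrix.of fun a b => D2 u a b p) :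
      Matrix (Fin n) (Fin n) ℝ).det) (Sset n) := by
  rintro ⟨x, t⟩ ht
  have ht' : (0 : ℝ) < t := ht
  have h1 : deriv (fun s => u x s) t = DT u (x, t) :=
    (slice_hasDerivAt hu Sset_open (mem_Sset ht')).deriv
  have h2 : (Matrix.of fun a b => D2 u a b (x, t)) = hess' (fun y => u y t) x := by
    ext a b
    exact (hess_eq hu ht' a b).symm
  show DT u (x, t) = 1 / (n:ℝ) * Real.log (of fun a b => D2 u a b (x, t)).det
  rw [← h1, hflow x t ht', h2]

lemma flow_third {x : Fin n → ℝ} {t : ℝ} (ht : 0 < t)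
    (hdet : (hess' (fun y => u y t) x).det ≠ 0) (i : Fin n) :
    fderiv ℝ (DT u) (x, t) (Pi.single i 1, 0)
      = (1 / (n : ℝ)) * ∑ a, ∑ b, ((hess' (fun y => u y t) x)⁻¹ b a) * D3 u a b i (x, t) := by
  have hp : (x, t) ∈ Sset n := ht
  have h2 : (Matrix.of fun a b => D2 u a b (x, t)) = hess' (fun y => u y t) x := by
    ext a b
    exact (hess_eq hu ht a b).symm
  have hMder : ∀ a b : Fin n, HasFDerivAt
      (fun p => ((Matrix.of fun a b => D2 u a b p) : Matrix (Fin n) (Fin n) ℝ) a b)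
      (fderiv ℝ (D2 u a b) (x, t)) (x, t) :=
    fun a b => pd_hasFDerivAt (hD2 hu a b) Sset_open hp
  have hdet' : HasFDerivAt
      (fun p => ((Matrix.of fun a b => D2 u a b p) : Matrix (Fin n) (Fin n) ℝ).det)
      (∑ a, ∑ q, ((Matrix.of fun a b => D2 u a b (x, t)) : Matrix (Fin n) (Fin n) ℝ).adjugate q a
        • fderiv ℝ (D2 u a q) (x, t)) (x, t) :=
    det_hasFDerivAt' _ _ _ hMder
  rw [h2] at hdet'
  have hdetne : ((Matrix.of fun a b => D2 u a b (x, t)) : Matrix (Fin n) (Fin n) ℝ).det ≠ 0 := by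
    rw [h2]; exact hdet
  have hlog := (hdet'.log hdetne).const_mul (1 / (n : ℝ))
  rw [h2] at hlog
  have hfd : fderiv ℝ (DT u) (x, t) = fderiv ℝ
      (fun p => (1 / (n : ℝ)) * Real.log ((Matrix.of fun a b => D2 u a b p) :
        Matrix (Fin n) (Fin n) ℝ).det) (x, t) :=
    pd_eqOn_fderiv Sset_open (DT_eq hu hflow) hp
  rw [hfd, hlog.fderiv]
  have hD3 : ∀ a b : Fin n, fderiv ℝ (D2 u a b) (x, t) (Pi.single i 1, 0) = D3 u a b i (x, t) :=
    fun _ _ => rfl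
  have hinv : ∀ b a : Fin n, (hess' (fun y => u y t) x)⁻¹ b a
      = ((hess' (fun y => u y t) x).det)⁻¹ * (hess' (fun y => u y t) x).adjugate b a := by
    intro b a
    rw [Matrix.inv_def]
    simp [smul_eq_mul]
  simp only [ContinuousLinearMap.smul_apply, ContinuousLinearMap.sum_apply, smul_eq_mul]
  simp_rw [hD3, hinv, Finset.mul_sum]
  refine Finset.sum_congr rfl fun a _ => Finset.sum_congr rfl fun b _ => by ring
end setup

lemma sum3_rev {m : ℕ} (H : Fin m → Fin m → Fin m → ℝ) :
    ∑ a, ∑ b, ∑ c, H a b c = ∑ c, ∑ b, ∑ a, H a b c :=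
  calc ∑ a, ∑ b, ∑ c, H a b c
      = ∑ a, ∑ c, ∑ b, H a b c := Finset.sum_congr rfl fun _ _ => Finset.sum_comm
    _ = ∑ c, ∑ a, ∑ b, H a b c := Finset.sum_comm
    _ = ∑ c, ∑ b, ∑ a, H a b c := Finset.sum_congr rfl fun _ _ => Finset.sum_comm

lemma algebra_main (m : ℕ) (nn : ℝ) (B d2 : Fin m → Fin m → ℝ) (d1 : Fin m → ℝ)
    (d3 : Fin m → Fin m → Fin m → ℝ)
    (hd2 : ∀ a b, d2 a b = d2 b a)
    (h31 : ∀ a b c, d3 a b c = d3 b a c) (h32 : ∀ a b c, d3 a b c = d3 a c b) :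
    (∑ i, 2 * d1 i * ((1 / nn) * ∑ a, ∑ b, B b a * d3 a b i))
      - (1 / nn) * ∑ i, ∑ j, B i j * (∑ k, 2 * (d2 k j * d2 k i + d1 k * d3 k i j))
    = -(2 / nn) * ∑ p, ∑ q, ∑ i, B p q * d2 p i * d2 q i := by
  have hperm : ∀ a b i, d3 a b i = d3 i b a := fun a b i => by rw [h31, h32, h31]
  have hT : (∑ i, 2 * d1 i * ((1 / nn) * ∑ a, ∑ b, B b a * d3 a b i))
      = (1 / nn) * ∑ i, ∑ j, B i j * ∑ k, 2 * (d1 k * d3 k i j) := by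
    have l1 : (∑ i, 2 * d1 i * ((1 / nn) * ∑ a, ∑ b, B b a * d3 a b i))
        = ∑ i, ∑ a, ∑ b, 2 * (1 / nn) * B b a * d1 i * d3 i b a := by
      simp_rw [Finset.mul_sum]
      refine Finset.sum_congr rfl fun i _ => Finset.sum_congr rfl fun a _ =>
        Finset.sum_congr rfl fun b _ => ?_
      rw [hperm a b i]; ring
    have r1 : (1 / nn) * (∑ i, ∑ j, B i j * ∑ k, 2 * (d1 k * d3 k i j))
        = ∑ i, ∑ j, ∑ k, 2 * (1 / nn) * B i j * d1 k * d3 k i j := by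
      simp_rw [Finset.mul_sum]
      refine Finset.sum_congr rfl fun i _ => Finset.sum_congr rfl fun j _ =>
        Finset.sum_congr rfl fun k _ => by ring
    rw [l1, r1]
    exact sum3_rev fun i a b => 2 * (1 / nn) * B b a * d1 i * d3 i b a
  have hS : (1 / nn) * (∑ i, ∑ j, B i j * ∑ k, 2 * (d2 k j * d2 k i))
      = (2 / nn) * ∑ p, ∑ q, ∑ i, B p q * d2 p i * d2 q i := by
    simp_rw [Finset.mul_sum]
    refine Finset.sum_congr rfl fun i _ => Finset.sum_congr rfl fun j _ =>
      Finset.sum_congr rfl fun k _ => ?_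
    rw [hd2 k j, hd2 k i]; ring
  have hsplit : (∑ i, ∑ j, B i j * (∑ k, 2 * (d2 k j * d2 k i + d1 k * d3 k i j)))
      = (∑ i, ∑ j, B i j * ∑ k, 2 * (d2 k j * d2 k i))
        + ∑ i, ∑ j, B i j * ∑ k, 2 * (d1 k * d3 k i j) := by
    rw [← Finset.sum_add_distrib]
    refine Finset.sum_congr rfl fun i _ => ?_
    rw [← Finset.sum_add_distrib]
    refine Finset.sum_congr rfl fun j _ => ?_
    rw [← mul_add, ← Finset.sum_add_distrib]
    exact congrArg _ (Finset.sum_congr rfl fun k _ => by ring)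
  rw [hsplit, hT]
  linear_combination -hS


lemma sum_nonneg_posdef {m : ℕ} {C A : Matrix (Fin m) (Fin m) ℝ} (hC : C.PosDef) :
    0 ≤ ∑ p, ∑ q, ∑ i, C p q * A p i * A q i := by
  have h1 : ∑ p, ∑ q, ∑ i : Fin m, C p q * A p i * A q i
      = ∑ i, ∑ p, ∑ q : Fin m, C p q * A p i * A q i :=
    calc ∑ p, ∑ q, ∑ i : Fin m, C p q * A p i * A q i
        = ∑ p, ∑ i, ∑ q : Fin m, C p q * A p i * A q i :=
          Finset.sum_congr rfl fun _ _ => Finset.sum_comm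
      _ = ∑ i, ∑ p, ∑ q : Fin m, C p q * A p i * A q i := Finset.sum_comm
  rw [h1]
  refine Finset.sum_nonneg fun i _ => ?_
  have h2 := hC.posSemidef.dotProduct_mulVec_nonneg (fun p => A p i)
  have h3 : dotProduct (star fun p => A p i) (C.mulVec fun p => A p i)
      = ∑ p, ∑ q : Fin m, C p q * A p i * A q i := by
    simp only [dotProduct, Matrix.mulVec, Pi.star_apply, star_trivial, Finset.mul_sum]
    exact Finset.sum_congr rfl fun p _ => Finset.sum_congr rfl fun q _ => by ring
  rw [h3] at h2
  exact h2


theorem gradient_norm_squared_evolution (n : ℕ) (hn : 1 ≤ n)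
    (u : (Fin n → ℝ) → ℝ → ℝ)
    (hsmooth : ContDiffOn ℝ (⊤ : ℕ∞) (fun p : (Fin n → ℝ) × ℝ => u p.1 p.2)
      {p : (Fin n → ℝ) × ℝ | 0 < p.2})
    (hposdef : ∀ (x : Fin n → ℝ) (t : ℝ), 0 < t → (hess' (fun y => u y t) x).PosDef)
    (hflow : ∀ (x : Fin n → ℝ) (t : ℝ), 0 < t →
      deriv (fun s => u x s) t = (1 / n) * Real.log (hess' (fun y => u y t) x).det) :
    ∀ (x : Fin n → ℝ) (t : ℝ), 0 < t →
      deriv (fun s => ∑ i, (grad' (fun y => u y s) x i) ^ 2) t -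
          (1 / n) * ∑ i, ∑ j, ((hess' (fun y => u y t) x)⁻¹ i j) *
            hess' (fun y => ∑ k, (grad' (fun z => u z t) y k) ^ 2) x i j =
        -(2 / n) * ∑ p, ∑ q, ∑ i, ((hess' (fun y => u y t) x)⁻¹ p q) *
          hess' (fun y => u y t) x p i * hess' (fun y => u y t) x q i ∧
      -(2 / n) * ∑ p, ∑ q, ∑ i, ((hess' (fun y => u y t) x)⁻¹ p q) *
          hess' (fun y => u y t) x p i * hess' (fun y => u y t) x q i ≤ 0 := by
  intro x t ht
  have hu : ContDiffOn ℝ (⊤ : ℕ∞) (fun p : (Fin n → ℝ) × ℝ => u p.1 p.2) (Sset n) := hsmooth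
  have hA := hposdef x t ht
  have hdet : (hess' (fun y => u y t) x).det ≠ 0 := hA.det_pos.ne'
  constructor
  · rw [w_time_deriv hu ht]
    simp_rw [w_hess hu ht, mixed_symm hu (mem_Sset ht), flow_third hu hflow ht hdet,
      hess_eq hu ht]
    exact algebra_main n ((n : ℝ)) _ _ _ _ (fun a b => D2_symm hu (mem_Sset ht) a b)
      (fun a b c => D3_symm_inner hu (mem_Sset ht) a b c)
      (fun a b c => D3_symm_outer hu (mem_Sset ht) a b c)
  · have h0 : 0 ≤ ∑ p, ∑ q, ∑ i, ((hess' (fun y => u y t) x)⁻¹ p q) *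
        hess' (fun y => u y t) x p i * hess' (fun y => u y t) x q i :=
      sum_nonneg_posdef hA.inv
    have h2 : (0:ℝ) ≤ 2 / n := by positivity
    have h3 := mul_nonneg h2 h0
    linarith
end
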